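/- Let R be a ring, let R[[s,t]] be the two-variable power series ring, χ_s = s·∂/∂s and χ_t = t·∂/∂t, and let r ∈ R[[s,t]] with constant term 1 and inverse r*. Define ε^s(r) = r*·χ_s(r) and ε^t(r) = r*·χ_t(r). Then χ_t(ε^s(r)) − χ_s(ε^t(r)) = [ε^s(r), ε^t(r)]. -/

import Mathlib

/-- The partial Euler operator `χ_i = x_i·∂/∂x_i` on `R⟦s,t⟧`
(two-variable power series, `i = 0` for `s`, `i = 1` for `t`), acting
coefficientwise: the coefficient of degree `d` is multiplied by `d i`. -/
def chiOp {R : Type*} [Ring R] (i : Fin 2)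
    (a : MvPowerSeries (Fin 2) R) : MvPowerSeries (Fin 2) R :=
  fun d => d i • MvPowerSeries.coeff d a

lemma chiOp_mul {R : Type*} [Ring R] (i : Fin 2) (a b : MvPowerSeries (Fin 2) R) :
    chiOp i (a * b) = chiOp i a * b + a * chiOp i b := by
  funext d
  have h1 : (chiOp i a * b + a * chiOp i b) d
      = MvPowerSeries.coeff d (chiOp i a * b) + MvPowerSeries.coeff d (a * chiOp i b) := rfl
  rw [h1, MvPowerSeries.coeff_mul, MvPowerSeries.coeff_mul]
  show d i • MvPowerSeries.coeff d (a * b) = _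
  rw [MvPowerSeries.coeff_mul, Finset.smul_sum, ← Finset.sum_add_distrib]
  refine Finset.sum_congr rfl fun p hp => ?_
  have hpd : p.1 + p.2 = d := Finset.HasAntidiagonal.mem_antidiagonal.mp hp
  have hdi : d i = p.1 i + p.2 i := by rw [← hpd]; rfl
  rw [hdi, add_smul]
  show _ = (p.1 i • MvPowerSeries.coeff p.1 a) * MvPowerSeries.coeff p.2 b
      + MvPowerSeries.coeff p.1 a * (p.2 i • MvPowerSeries.coeff p.2 b)
  rw [smul_mul_assoc, mul_smul_comm]

lemma chiOp_comm {R : Type*} [Ring R] (i j : Fin 2) (a : MvPowerSeries (Fin 2) R) :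
    chiOp i (chiOp j a) = chiOp j (chiOp i a) := by
  funext d
  show d i • (d j • MvPowerSeries.coeff d a) = d j • (d i • MvPowerSeries.coeff d a)
  rw [smul_smul, smul_smul, Nat.mul_comm]

lemma chiOp_one {R : Type*} [Ring R] (i : Fin 2) :
    chiOp i (1 : MvPowerSeries (Fin 2) R) = 0 := by
  funext d
  show d i • MvPowerSeries.coeff d 1 = 0
  rw [MvPowerSeries.coeff_one]
  split_ifs with h
  · subst h; simp
  · simp

/-- For `r ∈ R⟦s,t⟧` with constant term 1 and inverse `r*`, setting
`εˢ(r) = r*·χ_s(r)` and `εᵗ(r) = r*·χ_t(r)`, we have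
`χ_t(εˢ(r)) − χ_s(εᵗ(r)) = [εˢ(r), εᵗ(r)]`. -/
theorem stmt13 (R : Type*) [Ring R] (r rs : MvPowerSeries (Fin 2) R)
    (hc : MvPowerSeries.constantCoeff r = 1)
    (h1 : r * rs = 1) (h2 : rs * r = 1) :
    chiOp 1 (rs * chiOp 0 r) - chiOp 0 (rs * chiOp 1 r) =
      (rs * chiOp 0 r) * (rs * chiOp 1 r) -
        (rs * chiOp 1 r) * (rs * chiOp 0 r) := by
  have hrs : ∀ i : Fin 2, chiOp i rs = -(rs * chiOp i r * rs) := by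
    intro i
    have h := congrArg (chiOp i) h2
    rw [chiOp_mul, chiOp_one] at h
    have h' : chiOp i rs * r = -(rs * chiOp i r) := eq_neg_of_add_eq_zero_left h
    calc chiOp i rs = chiOp i rs * (r * rs) := by rw [h1, mul_one]
      _ = (chiOp i rs * r) * rs := by rw [mul_assoc]
      _ = -(rs * chiOp i r * rs) := by rw [h']; noncomm_ring
  rw [chiOp_mul, chiOp_mul, hrs 0, hrs 1, chiOp_comm 0 1]
  noncomm_ring
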